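/- arXiv:1902.04925 — 9 statements merged into one kernel-verified Lean document; each statement's English description precedes it below -/
import Mathlib

section
/- Let f be an assignment of items to bins for a TBPP instance. If for every item j the capacity constraint holds at the starting time s_j (i.e., for every bin i, the total weight of items k with f(k)=i that are active at time s_j is at most W), then the capacity constraint holds at every time instant τ (for every bin i, the total weight of items assigned to i that are active at τ is at most W). Consequently, an assignment is feasible if and only if it is feasible at the n starting times of the items. -/
open Finset

section ActiveItems

variable {ι α : Type*} [Fintype ι] [LinearOrder α] (p : ι → Prop) [DecidablePred p]
  (s t : ι → α)

abbrev activeAt (τ : α) : Finset ι :=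
  univ.filter fun k => p k ∧ s k ≤ τ ∧ τ < t k

/-- The witness is the active item that starts last: every item active at `τ` has started by
`s j ≤ τ` and is still running then. -/
theorem exists_activeAt_subset_activeAt_start {τ : α} (hne : (activeAt p s t τ).Nonempty) :
    ∃ j, p j ∧ activeAt p s t τ ⊆ activeAt p s t (s j) := by
  obtain ⟨j, hj, hlatest⟩ := (activeAt p s t τ).exists_max_image s hne
  obtain ⟨-, hpj, hsj, -⟩ := mem_filter.mp hj
  refine ⟨j, hpj, fun k hk => ?_⟩
  obtain ⟨-, hpk, -, hτk⟩ := mem_filter.mp hk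
  exact mem_filter.mpr ⟨mem_univ k, hpk, hlatest k hk, hsj.trans_lt hτk⟩

theorem sum_activeAt_le_of_forall_start {M : Type*} [AddCommMonoid M] [PartialOrder M]
    [IsOrderedAddMonoid M] {w : ι → M} (hw : ∀ k, 0 ≤ w k) {W : M} (hW : 0 ≤ W)
    (h : ∀ j, p j → ∑ k ∈ activeAt p s t (s j), w k ≤ W) (τ : α) :
    ∑ k ∈ activeAt p s t τ, w k ≤ W := by
  rcases (activeAt p s t τ).eq_empty_or_nonempty with hempty | hne
  · simpa [hempty] using hW
  · obtain ⟨j, hpj, hsub⟩ := exists_activeAt_subset_activeAt_start p s t hne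
    exact (sum_le_sum_of_subset_of_nonneg hsub fun k _ _ => hw k).trans (h j hpj)

end ActiveItems

theorem tbpp_feasible_iff_feasible_at_starting_times_general
    {n : ℕ} {I : Type*} [DecidableEq I]
    (W : ℤ) (hW : 0 < W)
    (w : Fin n → ℤ) (hw : ∀ j, 0 < w j ∧ w j ≤ W)
    (s t : Fin n → ℕ)
    (f : Fin n → I) :
    (∀ τ : ℕ, ∀ i : I,
        ∑ k ∈ univ.filter
          (fun k => f k = i ∧ s k ≤ τ ∧ τ < t k), w k ≤ W)
      ↔
    (∀ j : Fin n, ∀ i : I,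
        ∑ k ∈ univ.filter
          (fun k => f k = i ∧ s k ≤ s j ∧ s j < t k), w k ≤ W) :=
  ⟨fun h j => h (s j), fun h τ i =>
    sum_activeAt_le_of_forall_start (f · = i) s t (fun k => (hw k).1.le) hW.le
      (fun j _ => h j i) τ⟩

/-- For a TBPP instance, an assignment `f` of items to bins satisfies the
capacity constraint at every time instant `τ` if and only if it satisfies it at the
`n` starting times `s j` of the items. -/
theorem tbpp_feasible_iff_feasible_at_starting_times
    {n : ℕ} {I : Type*} [DecidableEq I]
    (W : ℤ) (hW : 0 < W)
    (w : Fin n → ℤ) (hw : ∀ j, 0 < w j ∧ w j ≤ W)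
    (s t : Fin n → ℕ) (hst : ∀ j, s j < t j)
    (f : Fin n → I) :
    (∀ τ : ℕ, ∀ i : I,
        ∑ k ∈ univ.filter
          (fun k => f k = i ∧ s k ≤ τ ∧ τ < t k), w k ≤ W)
      ↔
    (∀ j : Fin n, ∀ i : I,
        ∑ k ∈ univ.filter
          (fun k => f k = i ∧ s k ≤ s j ∧ s j < t k), w k ≤ W) :=
  tbpp_feasible_iff_feasible_at_starting_times_general W hW w hw s t f
end

section
/- For a TBPP instance, for each item j let S̄_j denote the set of items active at time s_j, and call j non-dominated if there is no item k with S̄_j ⊊ S̄_k. Then an assignment f of items to bins is feasible if and only if, for every non-dominated item j, the capacity constraint holds at time s_j (for every bin i, the total weight of items k with f(k)=i active at s_j is at most W). In particular, whenever S̄_j ⊆ S̄_k, feasibility of f at time s_k implies feasibility of f at time s_j. -/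
/-!
The load of a bin at time `τ` only depends on the set of items active at `τ`, and grows with it
since weights are nonnegative. Every nonempty active set is contained in the active set at the
latest starting time among its items, and every such set `S̄_j` lies in a maximal one `S̄_{j'}`,
i.e. one of a non-dominated item; so checking the non-dominated starting times suffices.
-/

open Finset

theorem exists_subset_forall_not_ssubset {ι α : Type*} [Finite ι] (A : ι → Finset α) (j : ι) :
    ∃ j', A j ⊆ A j' ∧ ¬ ∃ k, A j' ⊂ A k := by
  obtain ⟨_, hle, ⟨j', rfl⟩, hmax⟩ :=
    (Set.finite_range A).exists_le_maximal (Set.mem_range_self j)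
  exact ⟨j', hle, fun ⟨k, hk⟩ => hk.not_subset (hmax (Set.mem_range_self k) hk.subset)⟩

namespace TBPP

variable {ι T M β : Type*} [Fintype ι] [LinearOrder T]

def activeAt (s t : ι → T) (τ : T) : Finset ι :=
  univ.filter fun ℓ => s ℓ ≤ τ ∧ τ < t ℓ

@[simp]
theorem mem_activeAt {s t : ι → T} {τ : T} {k : ι} :
    k ∈ activeAt s t τ ↔ s k ≤ τ ∧ τ < t k := by
  simp [activeAt]

def load [DecidableEq β] [AddCommMonoid M] (s t : ι → T) (f : ι → β) (w : ι → M) (τ : T)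
    (i : β) : M :=
  ∑ k ∈ univ.filter (fun k => f k = i ∧ s k ≤ τ ∧ τ < t k), w k

theorem load_le_load_of_activeAt_subset [DecidableEq β] [AddCommMonoid M] [PartialOrder M]
    [IsOrderedAddMonoid M] {s t : ι → T} (f : ι → β) {w : ι → M} (hw : ∀ k, 0 ≤ w k)
    {τ₁ τ₂ : T} (h : activeAt s t τ₁ ⊆ activeAt s t τ₂) (i : β) :
    load s t f w τ₁ i ≤ load s t f w τ₂ i := by
  refine sum_le_sum_of_subset_of_nonneg (fun k hk => ?_) (fun k _ _ => hw k)
  simp only [mem_filter, mem_univ, true_and] at hk ⊢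
  exact ⟨hk.1, mem_activeAt.1 (h (mem_activeAt.2 hk.2))⟩

theorem load_eq_zero_of_activeAt_eq_empty [DecidableEq β] [AddCommMonoid M] {s t : ι → T}
    (f : ι → β) (w : ι → M) {τ : T} (h : activeAt s t τ = ∅) (i : β) :
    load s t f w τ i = 0 := by
  refine sum_eq_zero fun k hk => absurd (mem_activeAt.2 ?_) (h ▸ notMem_empty k)
  exact (mem_filter.1 hk).2.2

theorem exists_activeAt_subset_activeAt_start {s t : ι → T} {τ : T}
    (h : (activeAt s t τ).Nonempty) : ∃ j, activeAt s t τ ⊆ activeAt s t (s j) := by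
  obtain ⟨j, hj, hmax⟩ := (activeAt s t τ).exists_max_image s h
  refine ⟨j, fun k hk => mem_activeAt.2 ⟨hmax k hk, ?_⟩⟩
  exact (mem_activeAt.1 hj).1.trans_lt (mem_activeAt.1 hk).2

end TBPP

open TBPP in
theorem tbpp_feasible_iff_feasible_at_nondominated_general
    {n : ℕ} {I : Type*} [DecidableEq I]
    (W : ℤ) (hW : 0 < W)
    (w : Fin n → ℤ) (hw : ∀ j, 0 < w j ∧ w j ≤ W)
    (s t : Fin n → ℕ)
    (f : Fin n → I) :
    ((∀ τ : ℕ, ∀ i : I,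
        ∑ k ∈ univ.filter (fun k => f k = i ∧ s k ≤ τ ∧ τ < t k), w k ≤ W)
      ↔
      (∀ j : Fin n,
        (¬ ∃ k : Fin n,
            univ.filter (fun ℓ => s ℓ ≤ s j ∧ s j < t ℓ)
              ⊂ univ.filter (fun ℓ => s ℓ ≤ s k ∧ s k < t ℓ)) →
        ∀ i : I,
          ∑ k ∈ univ.filter (fun k => f k = i ∧ s k ≤ s j ∧ s j < t k), w k ≤ W))
    ∧
    (∀ j k : Fin n,
        univ.filter (fun ℓ => s ℓ ≤ s j ∧ s j < t ℓ)
          ⊆ univ.filter (fun ℓ => s ℓ ≤ s k ∧ s k < t ℓ) →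
        (∀ i : I,
          ∑ k' ∈ univ.filter (fun k' => f k' = i ∧ s k' ≤ s k ∧ s k < t k'), w k' ≤ W) →
        (∀ i : I,
          ∑ k' ∈ univ.filter (fun k' => f k' = i ∧ s k' ≤ s j ∧ s j < t k'), w k' ≤ W)) := by
  have hw₀ : ∀ k, 0 ≤ w k := fun k => (hw k).1.le
  refine ⟨⟨fun h j _ => h (s j), fun h τ i => ?_⟩, fun j k hjk hk i =>
    (load_le_load_of_activeAt_subset f hw₀ hjk i).trans (hk i)⟩
  change load s t f w τ i ≤ W
  rcases (activeAt s t τ).eq_empty_or_nonempty with hempty | hne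
  · rw [load_eq_zero_of_activeAt_eq_empty f w hempty]
    exact hW.le
  · obtain ⟨j, hj⟩ := exists_activeAt_subset_activeAt_start hne
    obtain ⟨j', hjj', hj'⟩ := exists_subset_forall_not_ssubset (fun k => activeAt s t (s k)) j
    exact (load_le_load_of_activeAt_subset f hw₀ (hj.trans hjj') i).trans (h j' hj' i)

/-- Feasibility of a TBPP assignment is equivalent to feasibility at the
starting times of the non-dominated items (items `j` such that no item `k` satisfies
`S̄_j ⊊ S̄_k`, where `S̄_j` is the set of items active at time `s j`).  Moreover,
whenever `S̄_j ⊆ S̄_k`, feasibility at time `s k` implies feasibility at time `s j`. -/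
theorem tbpp_feasible_iff_feasible_at_nondominated
    {n : ℕ} {I : Type*} [DecidableEq I]
    (W : ℤ) (hW : 0 < W)
    (w : Fin n → ℤ) (hw : ∀ j, 0 < w j ∧ w j ≤ W)
    (s t : Fin n → ℕ) (hst : ∀ j, s j < t j)
    (f : Fin n → I) :
    ((∀ τ : ℕ, ∀ i : I,
        ∑ k ∈ univ.filter (fun k => f k = i ∧ s k ≤ τ ∧ τ < t k), w k ≤ W)
      ↔
      (∀ j : Fin n,
        (¬ ∃ k : Fin n,
            univ.filter (fun ℓ => s ℓ ≤ s j ∧ s j < t ℓ)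
              ⊂ univ.filter (fun ℓ => s ℓ ≤ s k ∧ s k < t ℓ)) →
        ∀ i : I,
          ∑ k ∈ univ.filter (fun k => f k = i ∧ s k ≤ s j ∧ s j < t k), w k ≤ W))
    ∧
    (∀ j k : Fin n,
        univ.filter (fun ℓ => s ℓ ≤ s j ∧ s j < t ℓ)
          ⊆ univ.filter (fun ℓ => s ℓ ≤ s k ∧ s k < t ℓ) →
        (∀ i : I,
          ∑ k' ∈ univ.filter (fun k' => f k' = i ∧ s k' ≤ s k ∧ s k < t k'), w k' ≤ W) →
        (∀ i : I,
          ∑ k' ∈ univ.filter (fun k' => f k' = i ∧ s k' ≤ s j ∧ s j < t k'), w k' ≤ W)) :=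
  tbpp_feasible_iff_feasible_at_nondominated_general W hW w hw s t f
end

section
/- Consider the TBPP instance with 5 items of weights w₁=10, w₂=2, w₃=4, w₄=6, w₅=8, bin capacity W=10, starting times s=(0,0,0,1,1) and ending times t=(1,2,2,2,2) (so items 1,2,3 are active at time 0 and items 2,3,4,5 are active at time 1). Then: (i) the items active at time 0 can be packed into 2 bins of capacity 10, and the items active at time 1 can be packed into 2 bins of capacity 10; but (ii) every feasible TBPP assignment for this instance uses at least 3 bins. Hence the lower bound LB₀ (the maximum over time instants of the Bin Packing optimum on the active items) can be strictly smaller than the TBPP optimum. -/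
open Finset

/-- Weights of the 5-item example instance. -/
def exW : Fin 5 → ℤ := ![10, 2, 4, 6, 8]

/-- Starting times of the 5-item example instance. -/
def exS : Fin 5 → ℕ := ![0, 0, 0, 1, 1]

/-- Ending times of the 5-item example instance. -/
def exT : Fin 5 → ℕ := ![1, 2, 2, 2, 2]

/-- For the instance with weights (10,2,4,6,8), capacity 10, start times
(0,0,0,1,1) and end times (1,2,2,2,2): the items active at time 0 fit in 2 bins, the
items active at time 1 fit in 2 bins, but every feasible TBPP assignment uses at least
3 bins; hence `LB₀` can be strictly smaller than the TBPP optimum. -/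
theorem tbpp_LB0_can_be_strictly_smaller :
    (∃ g : Fin 5 → Fin 2, ∀ i : Fin 2,
        ∑ j ∈ univ.filter (fun j => g j = i ∧ exS j ≤ 0 ∧ 0 < exT j), exW j ≤ 10) ∧
    (∃ g : Fin 5 → Fin 2, ∀ i : Fin 2,
        ∑ j ∈ univ.filter (fun j => g j = i ∧ exS j ≤ 1 ∧ 1 < exT j), exW j ≤ 10) ∧
    (∀ (I : Type) [DecidableEq I], ∀ f : Fin 5 → I,
        (∀ τ : ℕ, ∀ i : I,
          ∑ j ∈ univ.filter (fun j => f j = i ∧ exS j ≤ τ ∧ τ < exT j), exW j ≤ 10) →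
        3 ≤ (univ.image f).card) := by
  refine ⟨⟨![0,1,1,0,0], ?_⟩, ⟨![0,0,1,1,0], ?_⟩, ?_⟩
  · intro i
    fin_cases i <;>
      simp [Finset.sum_filter, Fin.sum_univ_five, exW, exS, exT]
  · intro i
    fin_cases i <;>
      simp only [Finset.sum_filter] <;>
      simp [Finset.sum_filter, Fin.sum_univ_five, exW, exS, exT]
  · intro I _ f hf
    by_contra hc
    push_neg at hc
    have hcard2 : (univ.image f).card ≤ 2 := by omega
    have h0 := fun i => hf 0 i
    have h1 := fun i => hf 1 i
    simp only [Finset.sum_filter] at h0 h1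
    simp only [Finset.sum_filter, Fin.sum_univ_five, exW, exS, exT] at h0 h1
    norm_num at h0 h1
    have h10 : f 1 ≠ f 0 := by
      intro h
      have := h0 (f 0)
      simp [h] at this
      split_ifs at this <;> omega
    have hmem : ∀ j : Fin 5, f j = f 0 ∨ f j = f 1 := by
      intro j
      by_contra h
      push_neg at h
      have hsub : ({f 0, f 1, f j} : Finset I) ⊆ univ.image f := by
        intro x hx
        simp only [mem_insert, mem_singleton] at hx
        rcases hx with h' | h' | h' <;> subst h' <;> exact mem_image_of_mem f (mem_univ _)
      have hcard : ({f 0, f 1, f j} : Finset I).card = 3 := by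
        rw [card_insert_of_notMem, card_insert_of_notMem, card_singleton]
        · simp [Ne.symm h.2]
        · simp [Ne.symm h10, Ne.symm h.1]
      have := card_le_card hsub
      omega
    have h20 : f 2 ≠ f 0 := by
      intro h
      have := h0 (f 0)
      simp [h] at this
      split_ifs at this <;> omega
    have h21 : f 2 = f 1 := (hmem 2).resolve_left h20
    have h31 : f 3 ≠ f 1 := by
      intro h
      have := h1 (f 1)
      simp [h, h21] at this
      split_ifs at this <;> omega
    have h41 : f 4 ≠ f 1 := by
      intro h
      have := h1 (f 1)
      simp [h, h21] at this
      split_ifs at this <;> omega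
    have h30 : f 3 = f 0 := (hmem 3).resolve_right h31
    have h40 : f 4 = f 0 := (hmem 4).resolve_right h41
    have := h1 (f 0)
    simp [h30, h40, Ne.symm h10] at this
    split_ifs at this <;> omega
end

section
/- Consider the TBPP instance with 24 items and bin capacity W=3, where items 1,…,9 have weight 2 and are active exactly at time 0 (s_j=0, t_j=1), items 10,…,18 have weight 1 and are active at times 0 and 1 (s_j=0, t_j=2), and items 19,…,24 have weight 3 and are active exactly at time 1 (s_j=1, t_j=2). Then: (i) the items active at time 0 can be packed into 9 bins of capacity 3, and the items active at time 1 can be packed into 9 bins of capacity 3; but (ii) every feasible TBPP assignment for this instance uses at least 11 bins. Hence the gap between the TBPP optimum and the lower bound LB₀ (the maximum over time instants of the Bin Packing optimum on the active items) can be at least two. -/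
open Finset

/-- Weights of the 24-item example instance: items 1..9 (indices 0..8) have weight 2,
items 10..18 (indices 9..17) have weight 1, items 19..24 (indices 18..23) have weight 3. -/
def gapW : Fin 24 → ℤ := fun j => if (j : ℕ) < 9 then 2 else if (j : ℕ) < 18 then 1 else 3

/-- Starting times: items 1..18 start at time 0, items 19..24 start at time 1. -/
def gapS : Fin 24 → ℕ := fun j => if (j : ℕ) < 18 then 0 else 1

/-- Ending times: items 1..9 end at time 1, items 10..24 end at time 2. -/
def gapT : Fin 24 → ℕ := fun j => if (j : ℕ) < 9 then 1 else 2

/-- Auxiliary: the size of a subset of the items is the sum, over bins, of the sizes of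
its intersections with the fibers of the assignment. -/
theorem gap_fiber_count (I : Type) [DecidableEq I] (f : Fin 24 → I)
    (P : Fin 24 → Prop) [DecidablePred P] :
    (univ.filter P).card = ∑ i ∈ univ.image f, (univ.filter (fun j => f j = i ∧ P j)).card := by
  rw [Finset.card_eq_sum_card_fiberwise (f := f) (t := univ.image f)
    (fun x _ => Finset.mem_image_of_mem f (mem_univ x))]
  refine Finset.sum_congr rfl fun i _ => ?_
  rw [Finset.filter_filter]
  exact congrArg Finset.card (Finset.filter_congr fun j _ => by
    constructor <;> exact fun h => ⟨h.2, h.1⟩)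

/-- For this 24-item instance with capacity 3, the items active at time 0
fit in 9 bins and the items active at time 1 fit in 9 bins, but every feasible TBPP
assignment uses at least 11 bins; hence the gap between the TBPP optimum and `LB₀`
can be at least two. -/
theorem tbpp_LB0_gap_can_be_at_least_two :
    (∃ g : Fin 24 → Fin 9, ∀ i : Fin 9,
        ∑ j ∈ univ.filter (fun j => g j = i ∧ gapS j ≤ 0 ∧ 0 < gapT j), gapW j ≤ 3) ∧
    (∃ g : Fin 24 → Fin 9, ∀ i : Fin 9,
        ∑ j ∈ univ.filter (fun j => g j = i ∧ gapS j ≤ 1 ∧ 1 < gapT j), gapW j ≤ 3) ∧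
    (∀ (I : Type) [DecidableEq I], ∀ f : Fin 24 → I,
        (∀ τ : ℕ, ∀ i : I,
          ∑ j ∈ univ.filter (fun j => f j = i ∧ gapS j ≤ τ ∧ τ < gapT j), gapW j ≤ 3) →
        11 ≤ (univ.image f).card) := by
  refine ⟨⟨fun j => ⟨(j : ℕ) % 9, Nat.mod_lt _ (by norm_num)⟩, by decide⟩,
          ⟨fun j => ⟨(if (j:ℕ) < 9 then 0 else if (j:ℕ) < 18 then ((j:ℕ)-9)/3 else (j:ℕ)-15) % 9,
            Nat.mod_lt _ (by norm_num)⟩, by decide⟩, ?_⟩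
  intro I _ f hf
  set T := univ.image f with hT
  set a : I → ℕ := fun i => (univ.filter (fun j : Fin 24 => f j = i ∧ (j:ℕ) < 9)).card with ha
  set b : I → ℕ := fun i => (univ.filter (fun j : Fin 24 => f j = i ∧ 9 ≤ (j:ℕ) ∧ (j:ℕ) < 18)).card with hb
  set c : I → ℕ := fun i => (univ.filter (fun j : Fin 24 => f j = i ∧ 18 ≤ (j:ℕ))).card with hc
  have key : ∀ i, 2 * a i + b i + c i ≤ 3 := by
    intro i
    have h0 := hf 0 i
    have h1 := hf 1 i
    have e0 : (univ.filter (fun j : Fin 24 => f j = i ∧ gapS j ≤ 0 ∧ 0 < gapT j))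
        = (univ.filter fun j : Fin 24 => f j = i ∧ (j:ℕ) < 9)
          ∪ (univ.filter fun j : Fin 24 => f j = i ∧ 9 ≤ (j:ℕ) ∧ (j:ℕ) < 18) := by
      ext j
      simp only [mem_filter, mem_union, mem_univ, true_and]
      simp only [gapS, gapT]
      constructor
      · rintro ⟨h, hs, ht⟩
        by_cases h9 : (j:ℕ) < 9
        · exact Or.inl ⟨h, h9⟩
        · refine Or.inr ⟨h, by omega, ?_⟩
          by_contra h18
          simp [if_neg (by omega : ¬ (j:ℕ) < 18)] at hs
      · rintro (⟨h, h9⟩ | ⟨h, h9, h18⟩) <;>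
          refine ⟨h, by split <;> omega, by split <;> omega⟩
    have e1 : (univ.filter (fun j : Fin 24 => f j = i ∧ gapS j ≤ 1 ∧ 1 < gapT j))
        = (univ.filter fun j : Fin 24 => f j = i ∧ 9 ≤ (j:ℕ) ∧ (j:ℕ) < 18)
          ∪ (univ.filter fun j : Fin 24 => f j = i ∧ 18 ≤ (j:ℕ)) := by
      ext j
      simp only [mem_filter, mem_union, mem_univ, true_and]
      simp only [gapS, gapT]
      constructor
      · rintro ⟨h, hs, ht⟩
        by_cases h18 : (j:ℕ) < 18
        · refine Or.inl ⟨h, ?_, h18⟩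
          by_contra h9
          simp [if_pos (by omega : (j:ℕ) < 9)] at ht
        · exact Or.inr ⟨h, by omega⟩
      · rintro (⟨h, h9, h18⟩ | ⟨h, h18⟩) <;>
          refine ⟨h, by split <;> omega, by split <;> omega⟩
    have d0 : Disjoint (univ.filter fun j : Fin 24 => f j = i ∧ (j:ℕ) < 9)
        (univ.filter fun j : Fin 24 => f j = i ∧ 9 ≤ (j:ℕ) ∧ (j:ℕ) < 18) := by
      rw [Finset.disjoint_left]
      simp only [mem_filter, mem_univ, true_and]
      rintro j ⟨-, h⟩ ⟨-, h', -⟩; omega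
    have d1 : Disjoint (univ.filter fun j : Fin 24 => f j = i ∧ 9 ≤ (j:ℕ) ∧ (j:ℕ) < 18)
        (univ.filter fun j : Fin 24 => f j = i ∧ 18 ≤ (j:ℕ)) := by
      rw [Finset.disjoint_left]
      simp only [mem_filter, mem_univ, true_and]
      rintro j ⟨-, -, h⟩ ⟨-, h'⟩; omega
    have sA : ∑ j ∈ (univ.filter fun j : Fin 24 => f j = i ∧ (j:ℕ) < 9), gapW j = 2 * a i := by
      rw [Finset.sum_congr rfl (fun j hj => show gapW j = 2 by
        simp only [mem_filter, mem_univ, true_and] at hj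
        simp [gapW, hj.2])]
      simp [ha, mul_comm]
    have sB : ∑ j ∈ (univ.filter fun j : Fin 24 => f j = i ∧ 9 ≤ (j:ℕ) ∧ (j:ℕ) < 18), gapW j
        = b i := by
      rw [Finset.sum_congr rfl (fun j hj => show gapW j = 1 by
        simp only [mem_filter, mem_univ, true_and] at hj
        simp [gapW, hj.2.2, Nat.not_lt.mpr hj.2.1])]
      simp [hb]
    have sC : ∑ j ∈ (univ.filter fun j : Fin 24 => f j = i ∧ 18 ≤ (j:ℕ)), gapW j = 3 * c i := by
      rw [Finset.sum_congr rfl (fun j hj => show gapW j = 3 by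
        simp only [mem_filter, mem_univ, true_and] at hj
        simp [gapW, Nat.not_lt.mpr hj.2, Nat.not_lt.mpr (by omega : 9 ≤ (j:ℕ))])]
      simp [hc, mul_comm]
    rw [e0, Finset.sum_union d0, sA, sB] at h0
    rw [e1, Finset.sum_union d1, sB, sC] at h1
    omega
  have cA : ∑ i ∈ T, a i = 9 := by
    have h := gap_fiber_count I f (fun j => (j:ℕ) < 9)
    rw [show (univ.filter (fun j : Fin 24 => (j:ℕ) < 9)).card = 9 by decide] at h
    exact h.symm
  have cB : ∑ i ∈ T, b i = 9 := by
    have h := gap_fiber_count I f (fun j => 9 ≤ (j:ℕ) ∧ (j:ℕ) < 18)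
    rw [show (univ.filter (fun j : Fin 24 => 9 ≤ (j:ℕ) ∧ (j:ℕ) < 18)).card = 9 by decide] at h
    exact h.symm
  have cC : ∑ i ∈ T, c i = 6 := by
    have h := gap_fiber_count I f (fun j => 18 ≤ (j:ℕ))
    rw [show (univ.filter (fun j : Fin 24 => 18 ≤ (j:ℕ))).card = 6 by decide] at h
    exact h.symm
  have total : ∑ i ∈ T, (2 * a i + b i + c i) ≤ ∑ i ∈ T, 3 :=
    Finset.sum_le_sum (fun i _ => key i)
  rw [Finset.sum_const, smul_eq_mul] at total
  have lhs : ∑ i ∈ T, (2 * a i + b i + c i) = 33 := by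
    rw [Finset.sum_add_distrib, Finset.sum_add_distrib, ← Finset.mul_sum, cA, cB, cC]
    norm_num
  omega
end

section
/- Consider the linear programming relaxation LPᶜ of the compact TBPP formulation with n items and m = n bins: real variables x_{ij} ∈ [0,1] for each bin i and item j, and y_i ∈ [0,1] for each bin i, subject to Σ_i x_{ij} = 1 for every item j, and Σ_{j ∈ S_t} w_j x_{ij} ≤ W·y_i for every bin i and every time step t, where S_t denotes the set of items active at time step t; the objective is to minimize Σ_i y_i. Then the optimal value of LPᶜ equals (1/W)·max over time steps t of Σ_{j ∈ S_t} w_j. -/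
open Finset

/-- The optimal value of the LP relaxation `LPᶜ` of the compact TBPP
formulation with `n` items and `m = n` bins equals
`(1/W) · max over time steps t of Σ_{j ∈ S_t} w_j`, where the time steps are the
starting times of the items and `S_t` is the set of items active at time step `t`. -/
theorem tbpp_LPc_value
    {n : ℕ} (hn : 0 < n)
    (W : ℤ) (hW : 0 < W)
    (w : Fin n → ℤ) (hw : ∀ j, 0 < w j ∧ w j ≤ W)
    (s t : Fin n → ℕ) (hst : ∀ j, s j < t j) :
    IsLeast
      {v : ℝ | ∃ (x : Fin n → Fin n → ℝ) (y : Fin n → ℝ),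
        (∀ i j, 0 ≤ x i j ∧ x i j ≤ 1) ∧
        (∀ i, 0 ≤ y i ∧ y i ≤ 1) ∧
        (∀ j, ∑ i, x i j = 1) ∧
        (∀ i j', ∑ k ∈ univ.filter (fun k => s k ≤ s j' ∧ s j' < t k),
            (w k : ℝ) * x i k ≤ (W : ℝ) * y i) ∧
        v = ∑ i, y i}
      ((((univ.image fun j' : Fin n =>
            ∑ k ∈ univ.filter (fun k => s k ≤ s j' ∧ s j' < t k), w k).max'
          (Finset.Nonempty.image ⟨⟨0, hn⟩, Finset.mem_univ _⟩ _) : ℤ) : ℝ) / (W : ℝ)) := by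
  set T : Fin n → ℤ := fun j' => ∑ k ∈ univ.filter (fun k => s k ≤ s j' ∧ s j' < t k), w k
    with hTdef
  set M : ℤ := ((univ.image T).max'
      (Finset.Nonempty.image ⟨⟨0, hn⟩, Finset.mem_univ _⟩ _)) with hMdef
  have hle : ∀ j', T j' ≤ M := fun j' =>
    Finset.le_max' _ _ (mem_image_of_mem T (mem_univ j'))
  have hTpos : ∀ j', 0 < T j' := by
    intro j'
    have hj' : j' ∈ univ.filter (fun k => s k ≤ s j' ∧ s j' < t k) := by
      simp [hst j']
    have := Finset.single_le_sum (f := w) (fun k _ => (hw k).1.le) hj'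
    exact lt_of_lt_of_le (hw j').1 this
  have hTle : ∀ j', T j' ≤ (n : ℤ) * W := by
    intro j'
    calc T j' ≤ ∑ _k ∈ univ.filter (fun k => s k ≤ s j' ∧ s j' < t k), W :=
          Finset.sum_le_sum (fun k _ => (hw k).2)
      _ = ((univ.filter (fun k => s k ≤ s j' ∧ s j' < t k)).card : ℤ) * W := by
          simp [mul_comm]
      _ ≤ (n : ℤ) * W := by
          have : (univ.filter (fun k => s k ≤ s j' ∧ s j' < t k)).card ≤ n := by
            simpa using Finset.card_le_univ (univ.filter (fun k => s k ≤ s j' ∧ s j' < t k))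
          exact mul_le_mul_of_nonneg_right (by exact_mod_cast this) hW.le
  have hMpos : 0 < M := lt_of_lt_of_le (hTpos ⟨0, hn⟩) (hle _)
  have hMle : M ≤ (n : ℤ) * W := by
    obtain ⟨j', _, hj'⟩ := Finset.mem_image.mp
      (Finset.max'_mem (univ.image T) (Finset.Nonempty.image ⟨⟨0, hn⟩, Finset.mem_univ _⟩ _))
    rw [hMdef, ← hj']; exact hTle j'
  have hnR : (0 : ℝ) < n := by exact_mod_cast hn
  have hWR : (0 : ℝ) < W := by exact_mod_cast hW
  have hMR : (0 : ℝ) < M := by exact_mod_cast hMpos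
  constructor
  · -- membership: uniform solution
    refine ⟨fun _ _ => (n : ℝ)⁻¹, fun _ => (M : ℝ) / ((W : ℝ) * n), ?_, ?_, ?_, ?_, ?_⟩
    · intro i j
      constructor
      · positivity
      · rw [inv_le_one_iff₀]; right; exact_mod_cast hn
    · intro i
      constructor
      · positivity
      · rw [div_le_one (by positivity)]
        have : (M : ℝ) ≤ (n : ℝ) * W := by exact_mod_cast hMle
        linarith [this]
    · intro j
      simp [Finset.sum_const, card_univ]
      field_simp
    · intro i j'
      rw [← Finset.sum_mul]
      have hTM : ((T j' : ℤ) : ℝ) ≤ (M : ℝ) := by exact_mod_cast hle j'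
      have hsum : (∑ k ∈ univ.filter (fun k => s k ≤ s j' ∧ s j' < t k), (w k : ℝ))
          = ((T j' : ℤ) : ℝ) := by rw [hTdef]; push_cast; ring
      rw [hsum]
      rw [show (W : ℝ) * ((M : ℝ) / ((W : ℝ) * n)) = (M : ℝ) / n by field_simp]
      rw [div_eq_mul_inv]
      exact mul_le_mul_of_nonneg_right hTM (by positivity)
    · simp [Finset.sum_const, card_univ]
      field_simp
  · -- lower bound
    rintro v ⟨x, y, hx, hy, hcol, hcap, rfl⟩
    obtain ⟨j', _, hj'⟩ := Finset.mem_image.mp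
      (Finset.max'_mem (univ.image T) (Finset.Nonempty.image ⟨⟨0, hn⟩, Finset.mem_univ _⟩ _))
    rw [div_le_iff₀ hWR]
    have key : (M : ℝ) ≤ (W : ℝ) * ∑ i, y i := by
      have h1 : (M : ℝ) = ∑ k ∈ univ.filter (fun k => s k ≤ s j' ∧ s j' < t k), (w k : ℝ) := by
        rw [hMdef, ← hj', hTdef]; push_cast; ring
      have h2 : (M : ℝ) = ∑ i, ∑ k ∈ univ.filter (fun k => s k ≤ s j' ∧ s j' < t k),
          (w k : ℝ) * x i k := by
        rw [h1, Finset.sum_comm]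
        congr 1
        ext k
        rw [← Finset.mul_sum, hcol k, mul_one]
      rw [h2, Finset.mul_sum]
      exact Finset.sum_le_sum (fun i _ => hcap i j')
    linarith [key]
end

section
/- For an item j of a TBPP instance, let γ(j) be the set of items k ≠ j that are active at some time at which j is also active, and let σ(j) = max{ Σ_{k∈A} w_k : A ⊆ γ(j), Σ_{k∈A} w_k ≤ W − w_j } be the optimal value of the associated Subset Sum Problem. Define lifted weights w′ by w′_j = W − σ(j) and w′_k = w_k for k ≠ j. Then w′_j ≥ w_j, and an assignment f of items to bins is feasible for the instance with weights w if and only if it is feasible for the instance with weights w′. In particular the lifted instance has the same optimal number of bins as the original one. -/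
/-!
Lifting `w j` only matters in a bin that holds `j` at a time `τ` at which `j` is active. The
other items of that bin active at `τ` overlap `j`, so they form a subset `A` of `γ`; feasibility
for `w` gives `∑ A w ≤ W - w j`, hence `∑ A w ≤ σ` by maximality of `σ`, and the lifted load
`(W - σ) + ∑ A w` is still at most `W`. Conversely `w j ≤ W - σ` because `σ` itself is a
subset sum bounded by `W - w j`, so lifting only makes loads larger.
-/

open Finset

/-- A TBPP assignment `f` is feasible for weights `w`: at every time instant and for
every bin, the total weight of the items assigned to that bin that are active at that
time is at most `W`. -/
def TBPPFeasible {n : ℕ} {I : Type*} [DecidableEq I]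
    (W : ℤ) (w : Fin n → ℤ) (s t : Fin n → ℕ) (f : Fin n → I) : Prop :=
  ∀ τ : ℕ, ∀ i : I,
    ∑ k ∈ univ.filter (fun k => f k = i ∧ s k ≤ τ ∧ τ < t k), w k ≤ W

namespace TBPPFeasible

variable {n : ℕ} {I : Type*} [DecidableEq I] {W : ℤ} {w : Fin n → ℤ} {s t : Fin n → ℕ}
  {f : Fin n → I}

theorem of_le {w' : Fin n → ℤ} (hw : ∀ k, w k ≤ w' k) (hf : TBPPFeasible W w' s t f) :
    TBPPFeasible W w s t f :=
  fun τ i => (sum_le_sum fun k _ => hw k).trans (hf τ i)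

theorem update_sub_of_subsetSum_le {j : Fin n} {γ : Finset (Fin n)}
    (hγ : ∀ k ≠ j, (∃ τ, (s k ≤ τ ∧ τ < t k) ∧ (s j ≤ τ ∧ τ < t j)) → k ∈ γ) {σ : ℤ}
    (hσ : ∀ A ⊆ γ, ∑ k ∈ A, w k ≤ W - w j → ∑ k ∈ A, w k ≤ σ)
    (hf : TBPPFeasible W w s t f) :
    TBPPFeasible W (Function.update w j (W - σ)) s t f := by
  intro τ i
  set S := univ.filter (fun k => f k = i ∧ s k ≤ τ ∧ τ < t k)
  by_cases hj : j ∈ S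
  · have hj_active : s j ≤ τ ∧ τ < t j := (mem_filter.mp hj).2.2
    have hrest_sub : S \ {j} ⊆ γ := by
      intro k hk
      obtain ⟨hkS, hkj⟩ := mem_sdiff.mp hk
      exact hγ k (notMem_singleton.mp hkj) ⟨τ, (mem_filter.mp hkS).2.2, hj_active⟩
    have hload : w j + ∑ k ∈ S \ {j}, w k ≤ W :=
      (sum_eq_add_sum_sdiff_singleton_of_mem hj w).symm.trans_le (hf τ i)
    have hrest : ∑ k ∈ S \ {j}, w k ≤ σ := hσ _ hrest_sub (by linarith)
    rw [sum_update_of_mem hj]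
    linarith
  · rw [sum_update_of_notMem hj]
    exact hf τ i

end TBPPFeasible

theorem tbppFeasible_update_iff {n : ℕ} {I : Type*} [DecidableEq I] {W : ℤ} {w : Fin n → ℤ}
    {s t : Fin n → ℕ} {j : Fin n} {γ : Finset (Fin n)}
    (hγ : ∀ k ≠ j, (∃ τ, (s k ≤ τ ∧ τ < t k) ∧ (s j ≤ τ ∧ τ < t j)) → k ∈ γ) {σ : ℤ}
    (hσ : ∀ A ⊆ γ, ∑ k ∈ A, w k ≤ W - w j → ∑ k ∈ A, w k ≤ σ) (hwj : w j ≤ W - σ)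
    (f : Fin n → I) :
    TBPPFeasible W w s t f ↔ TBPPFeasible W (Function.update w j (W - σ)) s t f := by
  refine ⟨TBPPFeasible.update_sub_of_subsetSum_le hγ hσ, TBPPFeasible.of_le fun k => ?_⟩
  rcases eq_or_ne k j with rfl | hk
  · simpa using hwj
  · simp [hk]

theorem tbpp_lift1_general
    {n : ℕ} {I : Type*} [DecidableEq I]
    (W : ℤ)
    (w : Fin n → ℤ)
    (s t : Fin n → ℕ)
    (j : Fin n) (γ : Finset (Fin n))
    (hγ : ∀ k, k ∈ γ ↔
        (k ≠ j ∧ ∃ τ : ℕ, (s k ≤ τ ∧ τ < t k) ∧ (s j ≤ τ ∧ τ < t j)))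
    (σ : ℤ)
    (hσ : IsGreatest
        {v : ℤ | ∃ A : Finset (Fin n), A ⊆ γ ∧ v = ∑ k ∈ A, w k ∧ v ≤ W - w j} σ) :
    w j ≤ W - σ ∧
    (∀ f : Fin n → I,
        TBPPFeasible W w s t f ↔ TBPPFeasible W (Function.update w j (W - σ)) s t f) ∧
    (∀ m : ℕ,
        (∃ f : Fin n → Fin m, TBPPFeasible W w s t f) ↔
        (∃ f : Fin n → Fin m, TBPPFeasible W (Function.update w j (W - σ)) s t f)) := by
  obtain ⟨⟨_, _, _, hσ_le⟩, hσ_max⟩ := hσ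
  have hwj : w j ≤ W - σ := by linarith
  have hγ' : ∀ k ≠ j, (∃ τ, (s k ≤ τ ∧ τ < t k) ∧ (s j ≤ τ ∧ τ < t j)) → k ∈ γ :=
    fun k hkj hk => (hγ k).mpr ⟨hkj, hk⟩
  have hσ' : ∀ A ⊆ γ, ∑ k ∈ A, w k ≤ W - w j → ∑ k ∈ A, w k ≤ σ :=
    fun A hA hAw => hσ_max ⟨A, hA, rfl, hAw⟩
  exact ⟨hwj, tbppFeasible_update_iff hγ' hσ' hwj,
    fun m => exists_congr (tbppFeasible_update_iff hγ' hσ' hwj)⟩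

/-- Lift-1: let `γ` be the set of items `k ≠ j` active at some time at
which `j` is active, and let `σ` be the optimum of the associated Subset Sum Problem.
Lifting the weight of `j` to `W - σ` does not decrease it and preserves feasibility of
every assignment, hence also the optimal number of bins. -/
theorem tbpp_lift1
    {n : ℕ} {I : Type*} [DecidableEq I]
    (W : ℤ) (hW : 0 < W)
    (w : Fin n → ℤ) (hw : ∀ j, 0 < w j ∧ w j ≤ W)
    (s t : Fin n → ℕ) (hst : ∀ j, s j < t j)
    (j : Fin n) (γ : Finset (Fin n))
    (hγ : ∀ k, k ∈ γ ↔
        (k ≠ j ∧ ∃ τ : ℕ, (s k ≤ τ ∧ τ < t k) ∧ (s j ≤ τ ∧ τ < t j)))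
    (σ : ℤ)
    (hσ : IsGreatest
        {v : ℤ | ∃ A : Finset (Fin n), A ⊆ γ ∧ v = ∑ k ∈ A, w k ∧ v ≤ W - w j} σ) :
    w j ≤ W - σ ∧
    (∀ f : Fin n → I,
        TBPPFeasible W w s t f ↔ TBPPFeasible W (Function.update w j (W - σ)) s t f) ∧
    (∀ m : ℕ,
        (∃ f : Fin n → Fin m, TBPPFeasible W w s t f) ↔
        (∃ f : Fin n → Fin m, TBPPFeasible W (Function.update w j (W - σ)) s t f)) :=
  tbpp_lift1_general W w s t j γ hγ σ hσ
end

section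
/- For an item j of a TBPP instance and a time τ at which j is active, let σ(j,τ) = max{ Σ_{k∈A} w_k : A ⊆ {k ≠ j : k active at τ}, Σ_{k∈A} w_k ≤ W − w_j } be the optimal value of the associated Subset Sum Problem. Define lifted weights w′ by w′_j = min over times τ at which j is active of (W − σ(j,τ)), and w′_k = w_k for k ≠ j. Then w′_j ≥ w_j, and an assignment f of items to bins is feasible for the instance with weights w if and only if it is feasible for the instance with weights w′. In particular the lifted instance has the same optimal number of bins as the original one. -/
/-!
In a feasible packing, whenever `j` shares a bin with other items at a time `τ`, those items
form a feasible solution of the Subset Sum problem defining `σ τ`, so their weight is at most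
`σ τ ≤ W - w'j`: the bin still fits when `j` is given weight `w'j`. Conversely, lifting only
increases weights, so feasibility for the lifted weights implies feasibility for the original.
-/

open Finset

def IsValidLift {n : ℕ} (W : ℤ) (w : Fin n → ℤ) (s t : Fin n → ℕ) (j : Fin n) (c : ℤ) : Prop :=
  ∀ τ, s j ≤ τ → τ < t j → ∀ A : Finset (Fin n),
    (∀ k ∈ A, k ≠ j ∧ s k ≤ τ ∧ τ < t k) → ∑ k ∈ A, w k ≤ W - w j → ∑ k ∈ A, w k ≤ W - c

section

variable {n : ℕ} {I : Type*} [DecidableEq I] {W : ℤ} {w : Fin n → ℤ} {s t : Fin n → ℕ}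
  {f : Fin n → I} {j : Fin n} {c : ℤ}

theorem TBPPFeasible.of_le_s8 {w' : Fin n → ℤ} (hle : w ≤ w') (hf : TBPPFeasible W w' s t f) :
    TBPPFeasible W w s t f :=
  fun τ i => (sum_le_sum fun k _ => hle k).trans (hf τ i)

theorem TBPPFeasible.update_of_isValidLift (hc : IsValidLift W w s t j c)
    (hf : TBPPFeasible W w s t f) : TBPPFeasible W (Function.update w j c) s t f := by
  intro τ i
  set S := univ.filter (fun k => f k = i ∧ s k ≤ τ ∧ τ < t k)
  by_cases hj : j ∈ S
  · obtain ⟨-, hsj, htj⟩ := (mem_filter.mp hj).2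
    have hothers : ∀ k ∈ S \ {j}, k ≠ j ∧ s k ≤ τ ∧ τ < t k := fun k hk => by
      obtain ⟨hkS, hkj⟩ := mem_sdiff.mp hk
      exact ⟨notMem_singleton.mp hkj, (mem_filter.mp hkS).2.2⟩
    have hfit : w j + ∑ k ∈ S \ {j}, w k ≤ W :=
      sum_eq_add_sum_sdiff_singleton_of_mem hj w ▸ hf τ i
    have hlifted_fit := hc τ hsj htj (S \ {j}) hothers (by linarith)
    rw [sum_update_of_mem hj]
    linarith
  · rw [sum_update_of_notMem hj]
    exact hf τ i

theorem tbppFeasible_iff_update (hle : w j ≤ c) (hc : IsValidLift W w s t j c) :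
    TBPPFeasible W w s t f ↔ TBPPFeasible W (Function.update w j c) s t f :=
  ⟨TBPPFeasible.update_of_isValidLift hc,
    TBPPFeasible.of_le_s8 (le_update_iff.mpr ⟨hle, fun _ _ => le_rfl⟩)⟩

end

theorem tbpp_lift2_general
    {n : ℕ} {I : Type*} [DecidableEq I]
    (W : ℤ)
    (w : Fin n → ℤ)
    (s t : Fin n → ℕ)
    (j : Fin n) (σ : ℕ → ℤ)
    (hσ : ∀ τ : ℕ, s j ≤ τ → τ < t j →
        IsGreatest
          {v : ℤ | ∃ A : Finset (Fin n),
            (∀ k ∈ A, k ≠ j ∧ s k ≤ τ ∧ τ < t k) ∧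
            v = ∑ k ∈ A, w k ∧ v ≤ W - w j} (σ τ))
    (w'j : ℤ)
    (hw'j : IsLeast {v : ℤ | ∃ τ : ℕ, (s j ≤ τ ∧ τ < t j) ∧ v = W - σ τ} w'j) :
    w j ≤ w'j ∧
    (∀ f : Fin n → I,
        TBPPFeasible W w s t f ↔ TBPPFeasible W (Function.update w j w'j) s t f) ∧
    (∀ m : ℕ,
        (∃ f : Fin n → Fin m, TBPPFeasible W w s t f) ↔
        (∃ f : Fin n → Fin m, TBPPFeasible W (Function.update w j w'j) s t f)) := by
  have hle : w j ≤ w'j := by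
    obtain ⟨τ, ⟨hs, ht⟩, rfl⟩ := hw'j.1
    obtain ⟨A, -, -, hσle⟩ := (hσ τ hs ht).1
    linarith
  have hc : IsValidLift W w s t j w'j := fun τ hs ht A hA hAle =>
    ((hσ τ hs ht).2 ⟨A, hA, rfl, hAle⟩).trans (le_sub_comm.mp (hw'j.2 ⟨τ, ⟨hs, ht⟩, rfl⟩))
  exact ⟨hle, fun f => tbppFeasible_iff_update hle hc,
    fun m => exists_congr fun f => tbppFeasible_iff_update hle hc⟩

/-- Lift-2: for each time `τ` at which item `j` is active, let `σ τ` be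
the Subset Sum optimum over the items `k ≠ j` active at `τ` with capacity `W - w j`,
and let `w'j = min over such τ of (W - σ τ)`.  Then `w'j ≥ w j`, and replacing the
weight of `j` by `w'j` preserves feasibility of every assignment, hence also the
optimal number of bins. -/
theorem tbpp_lift2
    {n : ℕ} {I : Type*} [DecidableEq I]
    (W : ℤ) (hW : 0 < W)
    (w : Fin n → ℤ) (hw : ∀ j, 0 < w j ∧ w j ≤ W)
    (s t : Fin n → ℕ) (hst : ∀ j, s j < t j)
    (j : Fin n) (σ : ℕ → ℤ)
    (hσ : ∀ τ : ℕ, s j ≤ τ → τ < t j →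
        IsGreatest
          {v : ℤ | ∃ A : Finset (Fin n),
            (∀ k ∈ A, k ≠ j ∧ s k ≤ τ ∧ τ < t k) ∧
            v = ∑ k ∈ A, w k ∧ v ≤ W - w j} (σ τ))
    (w'j : ℤ)
    (hw'j : IsLeast {v : ℤ | ∃ τ : ℕ, (s j ≤ τ ∧ τ < t j) ∧ v = W - σ τ} w'j) :
    w j ≤ w'j ∧
    (∀ f : Fin n → I,
        TBPPFeasible W w s t f ↔ TBPPFeasible W (Function.update w j w'j) s t f) ∧
    (∀ m : ℕ,
        (∃ f : Fin n → Fin m, TBPPFeasible W w s t f) ↔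
        (∃ f : Fin n → Fin m, TBPPFeasible W (Function.update w j w'j) s t f)) :=
  tbpp_lift2_general W w s t j σ hσ w'j hw'j
end

section
/- Let 𝒫 be the collection of feasible packing patterns of a TBPP instance, i.e., subsets P of the item set N such that for every time τ the total weight of items of P active at τ is at most W. Let ξ : 𝒫 → [0,1] satisfy the covering constraints Σ_{P ∋ j} ξ_P ≥ 1 for every item j, and suppose the support {P : ξ_P > 0} has at most m elements. Then there exist x_{ij} ∈ [0,1] (for bins i = 1,…,m and items j) and y_i ∈ [0,1] satisfying Σ_{i=1}^m x_{ij} = 1 for every item j and Σ_{j active at τ, } w_j x_{ij} ≤ W·y_i for every bin i and every time τ, with Σ_{i=1}^m y_i = Σ_{P∈𝒫} ξ_P. Consequently the optimal value of the LP relaxation of the exponential-size (pattern-based) formulation is greater than or equal to the optimal value of the LP relaxation of the polynomial-size (assignment) formulation. -/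
open Finset

/-- A feasible packing pattern: a subset `P` of the items whose total active weight
respects the capacity `W` at every time instant. -/
def FeasPattern {n : ℕ} (W : ℤ) (w : Fin n → ℤ) (s t : Fin n → ℕ)
    (P : Finset (Fin n)) : Prop :=
  ∀ τ : ℕ, ∑ k ∈ P.filter (fun k => s k ≤ τ ∧ τ < t k), w k ≤ W

lemma sum_active_le {n : ℕ} {W : ℤ} {w : Fin n → ℤ} {s t : Fin n → ℕ}
    (hw : ∀ j, 0 < w j) (ξ : Finset (Fin n) → ℝ)
    (hξ0 : ∀ P, 0 ≤ ξ P)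
    (hfeas : ∀ P, ¬ FeasPattern W w s t P → ξ P = 0)
    (hcov : ∀ j : Fin n, 1 ≤ ∑ P ∈ univ.filter (fun P => j ∈ P), ξ P)
    (τ : ℕ) :
    ∑ k ∈ univ.filter (fun k => s k ≤ τ ∧ τ < t k), (w k : ℝ)
      ≤ (W : ℝ) * ∑ P : Finset (Fin n), ξ P := by
  set A := univ.filter (fun k : Fin n => s k ≤ τ ∧ τ < t k) with hA
  calc ∑ k ∈ A, (w k : ℝ)
      ≤ ∑ k ∈ A, (w k : ℝ) * ∑ P ∈ univ.filter (fun P => k ∈ P), ξ P := by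
        refine sum_le_sum fun k _ => ?_
        exact le_mul_of_one_le_right (by exact_mod_cast (hw k).le) (hcov k)
    _ = ∑ k ∈ A, ∑ P : Finset (Fin n), if k ∈ P then (w k : ℝ) * ξ P else 0 := by
        simp [mul_sum, sum_filter]
    _ = ∑ P : Finset (Fin n), ∑ k ∈ A, if k ∈ P then (w k : ℝ) * ξ P else 0 := sum_comm
    _ = ∑ P : Finset (Fin n), ξ P * ∑ k ∈ P.filter (fun k => s k ≤ τ ∧ τ < t k), (w k : ℝ) := by
        refine sum_congr rfl fun P _ => ?_
        rw [← sum_filter, mul_sum]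
        have : A.filter (fun k => k ∈ P) = P.filter (fun k => s k ≤ τ ∧ τ < t k) := by
          ext k; simp [hA, and_comm]
        rw [this]
        exact sum_congr rfl fun k _ => mul_comm _ _
    _ ≤ ∑ P : Finset (Fin n), ξ P * (W : ℝ) := by
        refine sum_le_sum fun P _ => ?_
        by_cases hP : ξ P = 0
        · simp [hP]
        · refine mul_le_mul_of_nonneg_left ?_ (hξ0 P)
          have hfP : FeasPattern W w s t P := by
            by_contra h; exact hP (hfeas P h)
          exact_mod_cast hfP τ
    _ = (W : ℝ) * ∑ P : Finset (Fin n), ξ P := by rw [← sum_mul, mul_comm]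

/-- any fractional covering solution `ξ` of the exponential-size
(pattern-based) LP relaxation whose support has at most `m` patterns can be converted
into a feasible solution `(x, y)` of the LP relaxation of the polynomial-size
(assignment) formulation with `m` bins and the same objective value; consequently the
LP value of the exponential-size formulation (with `m = n` bins for the compact model)
is at least the LP value of the polynomial-size formulation. -/
theorem tbpp_LPe_ge_LPc
    {n m : ℕ}
    (W : ℤ) (hW : 0 < W)
    (w : Fin n → ℤ) (hw : ∀ j, 0 < w j ∧ w j ≤ W)
    (s t : Fin n → ℕ) (hst : ∀ j, s j < t j) :
    (∀ ξ : Finset (Fin n) → ℝ,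
      (∀ P, 0 ≤ ξ P ∧ ξ P ≤ 1) →
      (∀ P, ¬ FeasPattern W w s t P → ξ P = 0) →
      (∀ j : Fin n, 1 ≤ ∑ P ∈ univ.filter (fun P => j ∈ P), ξ P) →
      (univ.filter (fun P => ξ P ≠ 0)).card ≤ m →
      ∃ (x : Fin m → Fin n → ℝ) (y : Fin m → ℝ),
        (∀ i j, 0 ≤ x i j ∧ x i j ≤ 1) ∧
        (∀ i, 0 ≤ y i ∧ y i ≤ 1) ∧
        (∀ j, ∑ i, x i j = 1) ∧
        (∀ i, ∀ τ : ℕ, ∑ k ∈ univ.filter (fun k => s k ≤ τ ∧ τ < t k),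
            (w k : ℝ) * x i k ≤ (W : ℝ) * y i) ∧
        ∑ i, y i = ∑ P : Finset (Fin n), ξ P)
    ∧
    sInf {v : ℝ | ∃ (x : Fin n → Fin n → ℝ) (y : Fin n → ℝ),
        (∀ i j, 0 ≤ x i j ∧ x i j ≤ 1) ∧
        (∀ i, 0 ≤ y i ∧ y i ≤ 1) ∧
        (∀ j, ∑ i, x i j = 1) ∧
        (∀ i, ∀ τ : ℕ, ∑ k ∈ univ.filter (fun k => s k ≤ τ ∧ τ < t k),
            (w k : ℝ) * x i k ≤ (W : ℝ) * y i) ∧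
        v = ∑ i, y i}
      ≤
    sInf {v : ℝ | ∃ ξ : Finset (Fin n) → ℝ,
        (∀ P, 0 ≤ ξ P) ∧
        (∀ P, ¬ FeasPattern W w s t P → ξ P = 0) ∧
        (∀ j : Fin n, 1 ≤ ∑ P ∈ univ.filter (fun P => j ∈ P), ξ P) ∧
        v = ∑ P : Finset (Fin n), ξ P} := by
  constructor
  · -- Part 1
    intro ξ hξ01 hfeas hcov hsupp
    rcases Nat.eq_zero_or_pos m with hm | hm
    · subst hm
      have hz : ∀ P, ξ P = 0 := by
        intro P
        by_contra h
        have hmem : P ∈ univ.filter (fun P => ξ P ≠ 0) := by simp [h]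
        have : (univ.filter (fun P : Finset (Fin n) => ξ P ≠ 0)) = ∅ :=
          card_eq_zero.mp (Nat.le_zero.mp hsupp)
        simp [this] at hmem
      have hcontr : ∀ j : Fin n, False := by
        intro j
        have h := hcov j
        rw [Finset.sum_congr rfl fun P _ => hz P] at h
        simp only [sum_const_zero] at h
        norm_num at h
      exact ⟨Fin.elim0, Fin.elim0, fun i => i.elim0, fun i => i.elim0,
        fun j => absurd trivial (fun _ => hcontr j), fun i => i.elim0,
        by simp [hz]⟩
    · set T := ∑ P : Finset (Fin n), ξ P with hT
      have hT0 : 0 ≤ T := sum_nonneg fun P _ => (hξ01 P).1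
      have hm' : (0 : ℝ) < m := by exact_mod_cast hm
      have hTm : T ≤ m := by
        calc T = ∑ P ∈ univ.filter (fun P => ξ P ≠ 0), ξ P :=
              (Finset.sum_filter_ne_zero _).symm
          _ ≤ ∑ _P ∈ univ.filter (fun P : Finset (Fin n) => ξ P ≠ 0), (1 : ℝ) :=
              sum_le_sum fun P _ => (hξ01 P).2
          _ = ((univ.filter (fun P : Finset (Fin n) => ξ P ≠ 0)).card : ℝ) := by simp
          _ ≤ (m : ℝ) := by exact_mod_cast hsupp
      refine ⟨fun _ _ => 1 / m, fun _ => T / m, ?_, ?_, ?_, ?_, ?_⟩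
      · intro i j
        constructor
        · positivity
        · rw [div_le_one hm']; exact_mod_cast hm
      · intro i
        exact ⟨div_nonneg hT0 hm'.le, (div_le_one hm').mpr hTm⟩
      · intro j
        rw [sum_const, card_univ, Fintype.card_fin, nsmul_eq_mul]
        field_simp
      · intro i τ
        have key := sum_active_le (fun j => (hw j).1) ξ (fun P => (hξ01 P).1) hfeas hcov τ
        calc ∑ k ∈ univ.filter (fun k => s k ≤ τ ∧ τ < t k), (w k : ℝ) * (1 / m)
            = (∑ k ∈ univ.filter (fun k => s k ≤ τ ∧ τ < t k), (w k : ℝ)) * (1 / m) := by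
              rw [sum_mul]
          _ ≤ ((W : ℝ) * T) * (1 / m) := by
              exact mul_le_mul_of_nonneg_right key (by positivity)
          _ = (W : ℝ) * (T / m) := by ring
      · rw [sum_const, card_univ, Fintype.card_fin, nsmul_eq_mul]
        field_simp
  · -- Part 2
    set C := {v : ℝ | ∃ (x : Fin n → Fin n → ℝ) (y : Fin n → ℝ),
        (∀ i j, 0 ≤ x i j ∧ x i j ≤ 1) ∧
        (∀ i, 0 ≤ y i ∧ y i ≤ 1) ∧
        (∀ j, ∑ i, x i j = 1) ∧
        (∀ i, ∀ τ : ℕ, ∑ k ∈ univ.filter (fun k => s k ≤ τ ∧ τ < t k),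
            (w k : ℝ) * x i k ≤ (W : ℝ) * y i) ∧
        v = ∑ i, y i} with hC
    have hCbdd : BddBelow C := by
      refine ⟨0, fun v hv => ?_⟩
      rcases hv with ⟨x, y, _, hy, _, _, hv⟩
      rw [hv]
      exact sum_nonneg fun i _ => (hy i).1
    -- the pattern LP set is nonempty
    have hEne : ∃ v : ℝ, v ∈ {v : ℝ | ∃ ξ : Finset (Fin n) → ℝ,
        (∀ P, 0 ≤ ξ P) ∧
        (∀ P, ¬ FeasPattern W w s t P → ξ P = 0) ∧
        (∀ j : Fin n, 1 ≤ ∑ P ∈ univ.filter (fun P => j ∈ P), ξ P) ∧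
        v = ∑ P : Finset (Fin n), ξ P} := by
      classical
      refine ⟨_, ⟨fun P => if ∃ j : Fin n, P = {j} then 1 else 0, ?_, ?_, ?_, rfl⟩⟩
      · intro P; dsimp only; split <;> norm_num
      · intro P hP
        dsimp only
        rw [if_neg]
        rintro ⟨j, rfl⟩
        apply hP
        intro τ
        by_cases hj : s j ≤ τ ∧ τ < t j
        · rw [filter_singleton, if_pos hj, sum_singleton]; exact (hw j).2
        · rw [filter_singleton, if_neg hj, sum_empty]; exact hW.le
      · intro j
        have hmem : ({j} : Finset (Fin n)) ∈ univ.filter (fun P => j ∈ P) := by simp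
        have := single_le_sum (f := fun P : Finset (Fin n) =>
            if ∃ j' : Fin n, P = {j'} then (1 : ℝ) else 0)
            (fun P _ => by split <;> norm_num) hmem
        simpa using this
    rcases hEne with ⟨v0, hv0⟩
    refine le_csInf ⟨v0, hv0⟩ ?_
    rintro v ⟨ξ, hξ0, hfeas, hcov, rfl⟩
    set T := ∑ P : Finset (Fin n), ξ P with hT
    have hT0 : 0 ≤ T := sum_nonneg fun P _ => hξ0 P
    rcases Nat.eq_zero_or_pos n with hn | hn
    · subst hn
      have h0C : (0 : ℝ) ∈ C := by
        refine ⟨Fin.elim0, Fin.elim0, fun i => i.elim0, fun i => i.elim0,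
          fun j => j.elim0, fun i => i.elim0, by simp⟩
      exact le_trans (csInf_le hCbdd h0C) hT0
    · have hn' : (0 : ℝ) < n := by exact_mod_cast hn
      set c := min T (n : ℝ) with hc
      have hc0 : 0 ≤ c := le_min hT0 hn'.le
      have hcn : c ≤ n := min_le_right _ _
      have hkey : ∀ τ : ℕ, ∑ k ∈ univ.filter (fun k => s k ≤ τ ∧ τ < t k), (w k : ℝ)
          ≤ (W : ℝ) * c := by
        intro τ
        have k1 := sum_active_le (fun j => (hw j).1) ξ hξ0 hfeas hcov τ
        have k2 : ∑ k ∈ univ.filter (fun k => s k ≤ τ ∧ τ < t k), (w k : ℝ)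
            ≤ (W : ℝ) * n := by
          calc ∑ k ∈ univ.filter (fun k => s k ≤ τ ∧ τ < t k), (w k : ℝ)
              ≤ ∑ _k ∈ univ.filter (fun k : Fin n => s k ≤ τ ∧ τ < t k), (W : ℝ) :=
                sum_le_sum fun k _ => by exact_mod_cast (hw k).2
            _ = ((univ.filter (fun k : Fin n => s k ≤ τ ∧ τ < t k)).card : ℝ) * W := by
                rw [sum_const, nsmul_eq_mul]
            _ ≤ (n : ℝ) * W := by
                refine mul_le_mul_of_nonneg_right ?_ (by exact_mod_cast hW.le)
                exact_mod_cast (card_filter_le _ _).trans (le_of_eq (by simp))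
            _ = (W : ℝ) * n := mul_comm _ _
        rcases le_total T (n : ℝ) with h | h
        · rw [hc, min_eq_left h]; exact k1
        · rw [hc, min_eq_right h]; exact k2
      have hcC : c ∈ C := by
        refine ⟨fun _ _ => 1 / n, fun _ => c / n, ?_, ?_, ?_, ?_, ?_⟩
        · intro i j
          constructor
          · positivity
          · rw [div_le_one hn']; exact_mod_cast hn
        · intro i
          exact ⟨div_nonneg hc0 hn'.le, (div_le_one hn').mpr hcn⟩
        · intro j
          rw [sum_const, card_univ, Fintype.card_fin, nsmul_eq_mul]
          field_simp
        · intro i τ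
          calc ∑ k ∈ univ.filter (fun k => s k ≤ τ ∧ τ < t k), (w k : ℝ) * (1 / n)
              = (∑ k ∈ univ.filter (fun k => s k ≤ τ ∧ τ < t k), (w k : ℝ)) * (1 / n) := by
                rw [sum_mul]
            _ ≤ ((W : ℝ) * c) * (1 / n) := mul_le_mul_of_nonneg_right (hkey τ) (by positivity)
            _ = (W : ℝ) * (c / n) := by ring
        · rw [sum_const, card_univ, Fintype.card_fin, nsmul_eq_mul]
          field_simp
      exact le_trans (csInf_le hCbdd hcC) (min_le_left _ _)
end

section
/- Consider the TBPP instance with 5 items of weights w₁=10, w₂=2, w₃=4, w₄=6, w₅=8, bin capacity W=10, starting times s=(0,0,0,1,1) and ending times t=(1,2,2,2,2), and let 𝒫 be its collection of feasible packing patterns. Then: (i) every ξ : 𝒫 → ℝ with ξ ≥ 0 satisfying Σ_{P ∋ j} ξ_P ≥ 1 for every item j has Σ_{P∈𝒫} ξ_P ≥ 5/2 (a certificate is that every feasible pattern contains at most two items, so the dual vector π_j = 1/2 for all j is feasible); and (ii) the LP relaxation of the polynomial-size assignment formulation of this instance admits a feasible solution of objective value 2. Hence the optimal value of the LP relaxation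 of the exponential-size formulation can be strictly larger than that of the polynomial-size formulation. -/
open Finset

/-- A feasible packing pattern of the example instance (capacity 10): a subset `P` of
the items whose total active weight respects the capacity at every time instant. -/
def exFeasPattern (P : Finset (Fin 5)) : Prop :=
  ∀ τ : ℕ, ∑ k ∈ P.filter (fun k => exS k ≤ τ ∧ τ < exT k), exW k ≤ 10

lemma card_le_two_of_feas (P : Finset (Fin 5)) (h : exFeasPattern P) : P.card ≤ 2 := by
  have h0 := h 0
  have h1 := h 1
  clear h
  revert h0 h1
  revert P
  decide

/-- for the example instance, every nonnegative fractional covering of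
the items by feasible patterns has total value at least `5/2`, while the LP relaxation
of the polynomial-size assignment formulation admits a feasible solution of objective
value `2`; hence the exponential-size LP bound can be strictly larger than the
polynomial-size LP bound. -/
theorem tbpp_LPe_can_be_strictly_larger_than_LPc :
    (∀ ξ : Finset (Fin 5) → ℝ,
      (∀ P, 0 ≤ ξ P) →
      (∀ P, ¬ exFeasPattern P → ξ P = 0) →
      (∀ j : Fin 5, 1 ≤ ∑ P ∈ univ.filter (fun P => j ∈ P), ξ P) →
      (5 : ℝ) / 2 ≤ ∑ P : Finset (Fin 5), ξ P)
    ∧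
    (∃ (x : Fin 5 → Fin 5 → ℝ) (y : Fin 5 → ℝ),
      (∀ i j, 0 ≤ x i j ∧ x i j ≤ 1) ∧
      (∀ i, 0 ≤ y i ∧ y i ≤ 1) ∧
      (∀ j, ∑ i, x i j = 1) ∧
      (∀ i, ∀ τ : ℕ, ∑ k ∈ univ.filter (fun k => exS k ≤ τ ∧ τ < exT k),
          (exW k : ℝ) * x i k ≤ 10 * y i) ∧
      ∑ i, y i = 2) := by
  constructor
  · intro ξ hnn hzero hcov
    have hswap : ∑ j : Fin 5, ∑ P ∈ univ.filter (fun P => j ∈ P), ξ P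
        = ∑ P : Finset (Fin 5), (P.card : ℝ) * ξ P := by
      simp_rw [Finset.sum_filter]
      rw [Finset.sum_comm]
      refine Finset.sum_congr rfl fun P _ => ?_
      rw [Finset.sum_ite_mem, Finset.univ_inter, Finset.sum_const, nsmul_eq_mul]
    have h5 : (5:ℝ) ≤ ∑ P : Finset (Fin 5), (P.card : ℝ) * ξ P := by
      rw [← hswap]
      calc (5:ℝ) = ∑ _j : Fin 5, 1 := by simp
        _ ≤ _ := Finset.sum_le_sum fun j _ => hcov j
    have h2 : ∑ P : Finset (Fin 5), (P.card : ℝ) * ξ P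
        ≤ ∑ P : Finset (Fin 5), 2 * ξ P := by
      refine Finset.sum_le_sum fun P _ => ?_
      by_cases hP : exFeasPattern P
      · have hc := card_le_two_of_feas P hP
        have : (P.card : ℝ) ≤ 2 := by exact_mod_cast hc
        exact mul_le_mul_of_nonneg_right this (hnn P)
      · rw [hzero P hP]; simp
    rw [← Finset.mul_sum] at h2
    linarith
  · refine ⟨fun i j => if i = 0 then ![4/5, 1, 0, 0, 1] j else if i = 1 then ![1/5, 0, 1, 1, 0] j else 0,
      ![1, 1, 0, 0, 0], ?_, ?_, ?_, ?_, ?_⟩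
    · intro i j; fin_cases i <;> fin_cases j <;> norm_num [Fin.ext_iff]
    · intro i; fin_cases i <;> norm_num
    · intro j; fin_cases j <;> simp [Fin.sum_univ_five] <;> norm_num
    · intro i τ
      match τ with
      | 0 => fin_cases i <;> simp [Finset.sum_filter, Fin.sum_univ_five, exS, exT, exW] <;> norm_num
      | 1 => fin_cases i <;> simp only [Finset.sum_filter, Fin.sum_univ_five] <;> simp [exS, exT, exW] <;> norm_num
      | (n+2) =>
        have hτ : ∀ k ∈ (univ : Finset (Fin 5)), ¬ (exS k ≤ n+2 ∧ n+2 < exT k) := by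
          intro k _ ⟨_, h2⟩
          fin_cases k <;> simp [exT] at h2 <;> omega
        rw [Finset.filter_false_of_mem hτ, Finset.sum_empty]
        fin_cases i <;> norm_num
    · rw [Fin.sum_univ_five]; simp; norm_num
end
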